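/- arXiv:2110.08293 — 2 statements merged into one kernel-verified Lean document; each statement's English description precedes it below -/
import Mathlib

section
/- In every dimension d there exists a unit vector v ∈ C^d with |⟨e_j, v⟩|² = 1/d and |⟨F e_j, v⟩|² = 1/d for all j = 0,...,d−1, i.e., v is unbiased to both the computational basis and the Fourier basis; one may take v to be any eigenvector of XZ. -/
open Matrix

/-- The discrete Fourier transform matrix `F_{jk} = ω^{jk}/√d`, `ω = e^{2πi/d}`. -/
noncomputable def Fmat (d : ℕ) : Matrix (Fin d) (Fin d) ℂ :=
  fun j k => Complex.exp (2 * Real.pi * Complex.I * ((j : ℕ) : ℂ) * ((k : ℕ) : ℂ) / d) /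
    (Real.sqrt d : ℂ)

/-!
The chirp `v k = ζ ^ ((d + 1) k²) / √d` with `ζ = exp (π i / d)`, an eigenvector of `XZ`, is
flat, and its Fourier coefficients are `(1 / d) ∑ₖ ζ ^ ((d + 1) k² - 2 j k)`. Because `d (d + 1)`
is even, the summand `g k` is `d`-periodic and satisfies `g (a + b) = g a * g b * ω ^ (a b)`, so it
lives on `ZMod d` with `ω` the standard character. For any unimodular `g` with this twisted
multiplicativity by a primitive character, expanding `|∑ g|²` and substituting `a = m + b`
leaves `∑ₘ g m ∑_b ω ^ (b m) = d`.
-/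

open Finset Complex

theorem AddChar.IsPrimitive.norm_sum_sq_eq_card {R : Type*} [CommRing R] [Fintype R]
    {ψ : AddChar R ℂ} (hψ : ψ.IsPrimitive) {g : R → ℂ} (hg : ∀ x, ‖g x‖ = 1)
    (hg_add : ∀ a b, g (a + b) = g a * g b * ψ (a * b)) :
    ‖∑ x, g x‖ ^ 2 = Fintype.card R := by
  classical
  have hg_conj : ∀ x, g x * starRingEnd ℂ (g x) = 1 := fun x => by
    rw [mul_conj', hg, ofReal_one, one_pow]
  have hg_zero : g 0 = 1 := by
    have h := hg_add 0 0
    rw [add_zero, mul_zero, AddChar.map_zero_eq_one, mul_one] at h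
    have h0 : g 0 ≠ 0 := by simp [← norm_ne_zero_iff, hg]
    exact (mul_eq_left₀ h0).mp h.symm
  have hshift : ∀ m b, g (m + b) * starRingEnd ℂ (g b) = g m * ψ (b * m) := fun m b => by
    rw [hg_add, mul_comm b m]
    linear_combination g m * ψ (m * b) * hg_conj b
  suffices h : ((‖∑ x, g x‖ ^ 2 : ℝ) : ℂ) = Fintype.card R by exact_mod_cast h
  calc ((‖∑ x, g x‖ ^ 2 : ℝ) : ℂ)
      = ∑ b, ∑ a, g a * starRingEnd ℂ (g b) := by
        rw [ofReal_pow, ← mul_conj', map_sum, sum_mul_sum, sum_comm]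
    _ = ∑ b, ∑ m, g m * ψ (b * m) := by
        refine sum_congr rfl fun b _ => ?_
        exact (Fintype.sum_equiv (Equiv.addRight b) _ _ fun m => (hshift m b).symm).symm
    _ = ∑ m, g m * ∑ b, ψ (b * m) := by
        rw [sum_comm]
        simp only [mul_sum]
    _ = Fintype.card R := by
        simp only [AddChar.sum_mulShift _ hψ, Nat.cast_ite, CharP.cast_eq_zero, mul_ite,
          mul_zero, sum_ite_eq', mem_univ, ↓reduceIte, hg_zero, one_mul]

section Chirp

variable (d : ℕ)

noncomputable def zeta : ℂ := exp (Real.pi * I / d)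

lemma norm_zeta : ‖zeta d‖ = 1 := by
  rw [zeta, norm_exp]
  simp

lemma zeta_ne_zero : zeta d ≠ 0 := exp_ne_zero _

noncomputable def chirp (j n : ℤ) : ℂ := zeta d ^ ((d + 1) * n ^ 2 - 2 * j * n)

lemma norm_chirp (j n : ℤ) : ‖chirp d j n‖ = 1 := by
  rw [chirp, norm_zpow, norm_zeta, _root_.one_zpow]

variable [NeZero d]

lemma zeta_zpow_add_two_mul (m t : ℤ) : zeta d ^ (m + 2 * d * t) = zeta d ^ m := by
  have hd : (d : ℂ) ≠ 0 := Nat.cast_ne_zero.mpr (NeZero.ne d)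
  have h : zeta d ^ (2 * (d : ℤ)) = 1 := by
    rw [zeta, ← exp_int_mul, ← exp_two_pi_mul_I]
    congr 1
    push_cast
    field_simp
  rw [zpow_add₀ (zeta_ne_zero d), _root_.zpow_mul, h, _root_.one_zpow, mul_one]

lemma zeta_zpow_two_mul (n : ℤ) : zeta d ^ (2 * n) = ZMod.stdAddChar (n : ZMod d) := by
  rw [ZMod.stdAddChar_coe, zeta, ← exp_int_mul]
  congr 1
  push_cast
  ring

lemma chirp_add_mul (j n t : ℤ) : chirp d j (n + d * t) = chirp d j n := by
  obtain ⟨c, hc⟩ := Int.even_mul_succ_self d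
  have h : (d + 1) * (n + d * t) ^ 2 - 2 * j * (n + d * t)
      = (d + 1) * n ^ 2 - 2 * j * n + 2 * d * ((d + 1) * n * t - j * t + c * t ^ 2) := by
    linear_combination (d : ℤ) * t ^ 2 * hc
  rw [chirp, h, zeta_zpow_add_two_mul, chirp]

lemma chirp_add (j a b : ℤ) :
    chirp d j (a + b) = chirp d j a * chirp d j b * ZMod.stdAddChar ((a * b : ℤ) : ZMod d) := by
  have h : (d + 1) * (a + b) ^ 2 - 2 * j * (a + b)
      = ((d + 1) * a ^ 2 - 2 * j * a) + ((d + 1) * b ^ 2 - 2 * j * b) + 2 * (a * b)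
        + 2 * d * (a * b) := by
    ring
  rw [chirp, h, zeta_zpow_add_two_mul, zpow_add₀ (zeta_ne_zero d),
    zpow_add₀ (zeta_ne_zero d), zeta_zpow_two_mul, chirp, chirp]

lemma chirp_val_add (j : ℤ) (a b : ZMod d) :
    chirp d j (a + b).val = chirp d j a.val * chirp d j b.val * ZMod.stdAddChar (a * b) := by
  have h := chirp_add_mul d j ((a.val + b.val) % d : ℕ) ((a.val + b.val) / d : ℕ)
  rw [← Nat.cast_mul, ← Nat.cast_add, Nat.mod_add_div, Nat.cast_add] at h
  rw [ZMod.val_add, ← h, chirp_add]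
  push_cast
  rw [ZMod.natCast_zmod_val, ZMod.natCast_zmod_val]

theorem norm_sum_chirp_sq (j : ℤ) : ‖∑ x : ZMod d, chirp d j x.val‖ ^ 2 = d := by
  rw [(ZMod.isPrimitive_stdAddChar d).norm_sum_sq_eq_card (fun x => norm_chirp d j _)
    (chirp_val_add d j), ZMod.card]

end Chirp

theorem Fin.sum_univ_eq_sum_zmod_val {M : Type*} [AddCommMonoid M] (d : ℕ) [NeZero d]
    (f : ℕ → M) : ∑ k : Fin d, f k = ∑ x : ZMod d, f x.val := by
  cases d with
  | zero => exact absurd rfl (NeZero.ne 0)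
  | succ n => rfl

lemma starRingEnd_Fmat_mul_chirp (d : ℕ) [NeZero d] (k j : Fin d) :
    starRingEnd ℂ (Fmat d k j) * (chirp d 0 k / (√d : ℝ)) = chirp d j k / d := by
  have hF : starRingEnd ℂ (Fmat d k j) = zeta d ^ (2 * -((k : ℤ) * j)) / (√d : ℝ) := by
    rw [Fmat, map_div₀, ← exp_conj, conj_ofReal, zeta, ← exp_int_mul]
    congr 1
    simp only [map_div₀, map_mul, conj_ofReal, conj_I, map_ofNat, conj_natCast]
    push_cast
    congr 1
    ring
  have hchirp : chirp d j k = chirp d 0 k * zeta d ^ (2 * -((k : ℤ) * j)) := by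
    rw [chirp, chirp, ← zpow_add₀ (zeta_ne_zero d)]
    congr 1
    ring
  have hsqrt : ((√d : ℝ) : ℂ) * (√d : ℝ) = d := by
    rw [← ofReal_mul, Real.mul_self_sqrt (Nat.cast_nonneg d), ofReal_natCast]
  rw [hF, div_mul_div_comm, hsqrt, mul_comm, hchirp]

/-- In every dimension `d` there exists a unit vector `v ∈ ℂ^d` that is
unbiased to both the computational basis and the Fourier basis:
`|⟨e_j, v⟩|² = 1/d` and `|⟨F e_j, v⟩|² = 1/d` for all `j`. -/
theorem exists_unbiased_to_id_and_fourier (d : ℕ) [NeZero d] :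
    ∃ v : Fin d → ℂ, (∑ j, ‖v j‖ ^ 2 = 1) ∧
      (∀ j, ‖v j‖ ^ 2 = 1 / d) ∧
      (∀ j, ‖∑ k, (starRingEnd ℂ) (Fmat d k j) * v k‖ ^ 2 = 1 / d) := by
  have hd : (d : ℝ) ≠ 0 := Nat.cast_ne_zero.mpr (NeZero.ne d)
  have hv : ∀ k : Fin d, ‖chirp d 0 k / (√d : ℝ)‖ ^ 2 = 1 / d := fun k => by
    rw [norm_div, norm_chirp, norm_real, Real.norm_of_nonneg (Real.sqrt_nonneg _), div_pow,
      one_pow, Real.sq_sqrt (Nat.cast_nonneg d)]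
  refine ⟨fun k => chirp d 0 k / (√d : ℝ), ?_, hv, fun j => ?_⟩
  · simp only [hv, sum_const, card_univ, Fintype.card_fin, nsmul_eq_mul]
    field_simp
  · simp only [starRingEnd_Fmat_mul_chirp]
    rw [← sum_div, Fin.sum_univ_eq_sum_zmod_val d (fun n => chirp d j n), norm_div,
      div_pow, norm_sum_chirp_sq, norm_natCast]
    field_simp
end

section
/- If φ is a fiducial state of a Weyl-Heisenberg covariant SIC-POVM in dimension d, then the vector of squared amplitudes (|⟨0,φ⟩|²,...,|⟨d−1,φ⟩|²)ᵀ equals F†((1/√d)e_0 + (1/√(d(d+1))) Σ_{j=1}^{d−1} e^{iα_j} e_j) for some phases α_j ∈ [0,2π) satisfying α_{d−j} = −α_j for all j = 1,...,d−1, where F is the discrete Fourier transform. -/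
open Matrix

/-- The cyclic shift `X = ∑ₖ |k+1⟩⟨k|`. -/
def Xmat (d : ℕ) [NeZero d] : Matrix (Fin d) (Fin d) ℂ :=
  fun j k => if j = k + 1 then 1 else 0

/-- The phase operator `Z = ∑ₖ ω^k |k⟩⟨k|`. -/
noncomputable def Zmat (d : ℕ) : Matrix (Fin d) (Fin d) ℂ :=
  Matrix.diagonal fun j => Complex.exp (2 * Real.pi * Complex.I * ((j : ℕ) : ℂ) / d)

/-!
Since `Z` is diagonal, `⟨φ, Z^k φ⟩ = ∑ⱼ ω^{jk} |φⱼ|² = √d vₖ`, where `v = F p` is the Fourier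
transform of the vector `p` of squared amplitudes. Hence `|vₖ| = 1/√(d(d+1))` for `k ≠ 0`,
`v₀ = 1/√d` by normalisation, and `v₋ₖ = conj vₖ` because `p` is real. As `F` is unitary,
`p = F† v`, and `αₖ` is the argument of `vₖ`.
-/

open Complex Real

lemma ZMod.val_finEquiv {d : ℕ} [NeZero d] (k : Fin d) : (ZMod.finEquiv d k).val = k := by
  obtain ⟨n, rfl⟩ := Nat.exists_eq_succ_of_ne_zero (NeZero.ne d)
  rfl

namespace Fin

variable {d : ℕ} [NeZero d]

-- `ZMod.finEquiv` is stated for the scoped ring structure on `Fin d`.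
open Fin.CommRing in
noncomputable def stdAddChar : AddChar (Fin d) ℂ :=
  ZMod.stdAddChar.compAddMonoidHom (ZMod.finEquiv d).toAddMonoidHom

lemma stdAddChar_apply (k : Fin d) :
    stdAddChar k = exp (2 * π * I * (k : ℕ) / d) := by
  rw [← ZMod.val_finEquiv k]
  exact ZMod.toCircle_apply _

open Fin.CommRing in
lemma val_nsmul_eq_mul (j k : Fin d) : (j : ℕ) • k = j * k := by
  rw [nsmul_eq_mul, Fin.cast_val_eq_self]

lemma stdAddChar_mul (j k : Fin d) :
    stdAddChar (j * k) = exp (2 * π * I * (j : ℕ) * (k : ℕ) / d) := by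
  rw [← val_nsmul_eq_mul, AddChar.map_nsmul_eq_pow, stdAddChar_apply, ← Complex.exp_nat_mul]
  ring_nf

lemma sum_stdAddChar_mul (b : Fin d) :
    ∑ x : Fin d, stdAddChar (x * b) = if b = 0 then (d : ℂ) else 0 := by
  have key := AddChar.sum_mulShift (ZMod.finEquiv d b) (ZMod.isPrimitive_stdAddChar d)
  rw [← (ZMod.finEquiv d).toEquiv.sum_comp] at key
  simpa [stdAddChar] using key

end Fin

section Fourier

variable {d : ℕ} [NeZero d]

lemma Fmat_apply (j k : Fin d) : Fmat d j k = Fin.stdAddChar (j * k) / (√d : ℂ) := by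
  rw [Fmat, Fin.stdAddChar_mul]

lemma Zmat_pow (k : Fin d) : Zmat d ^ (k : ℕ) = diagonal fun j => Fin.stdAddChar (k * j) := by
  rw [Zmat, diagonal_pow]
  congr 1
  ext j
  rw [Pi.pow_apply, ← Fin.stdAddChar_apply, ← AddChar.map_nsmul_eq_pow, Fin.val_nsmul_eq_mul]

lemma Fmat_conjTranspose_mul_self : (Fmat d)ᴴ * Fmat d = 1 := by
  ext i j
  have hd : ((√d : ℝ) : ℂ) * (√d : ℝ) = d := by
    rw [← ofReal_mul, Real.mul_self_sqrt (Nat.cast_nonneg d), ofReal_natCast]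
  have hterm (k : Fin d) :
      star (Fmat d k i) * Fmat d k j = Fin.stdAddChar (k * (j - i)) / d := by
    rw [Fmat_apply, Fmat_apply, star_div₀, ← starRingEnd_apply, ← starRingEnd_apply,
      ← AddChar.map_neg_eq_conj, Complex.conj_ofReal, div_mul_div_comm,
      ← AddChar.map_add_eq_mul, hd, mul_sub, neg_add_eq_sub]
  simp only [mul_apply, conjTranspose_apply, hterm, ← Finset.sum_div, Fin.sum_stdAddChar_mul,
    sub_eq_zero, one_apply, eq_comm (a := j)]
  split_ifs <;> simp [NeZero.ne d]

lemma Fmat_mulVec_apply_zero (v : Fin d → ℂ) : (Fmat d *ᵥ v) 0 = (∑ i, v i) / (√d : ℂ) := by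
  simp [mulVec, dotProduct, Fmat_apply, Finset.mul_sum, div_eq_inv_mul]

lemma Fmat_mulVec_apply_neg {v : Fin d → ℂ} (hv : star v = v) (k : Fin d) :
    (Fmat d *ᵥ v) (-k) = star ((Fmat d *ᵥ v) k) := by
  have hF (i : Fin d) : Fmat d (-k) i = star (Fmat d k i) := by
    rw [Fmat_apply, Fmat_apply, star_div₀, ← starRingEnd_apply, ← starRingEnd_apply,
      ← AddChar.map_neg_eq_conj, Complex.conj_ofReal, neg_mul]
  have hv' (i : Fin d) : star (v i) = v i := congrFun hv i
  simp only [mulVec, dotProduct, hF, star_sum, star_mul', hv']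

lemma star_dotProduct_Zmat_pow_mulVec (φ : Fin d → ℂ) (k : Fin d) :
    star φ ⬝ᵥ (Zmat d ^ (k : ℕ) *ᵥ φ) = √d * (Fmat d *ᵥ fun i => (‖φ i‖ : ℂ) ^ 2) k := by
  have hd : (√d : ℂ) ≠ 0 := ofReal_ne_zero.mpr (Real.sqrt_ne_zero'.mpr (by simp [NeZero.pos d]))
  rw [Zmat_pow]
  simp only [dotProduct, mulVec_diagonal, Pi.star_apply]
  simp only [mulVec, dotProduct, Fmat_apply, Finset.mul_sum]
  refine Finset.sum_congr rfl fun i _ => ?_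
  rw [← Complex.conj_mul', starRingEnd_apply]
  field_simp

end Fourier

namespace Complex

noncomputable def phase (z : ℂ) : ℝ := toIcoMod Real.two_pi_pos 0 z.arg

lemma phase_mem_Ico (z : ℂ) : phase z ∈ Set.Ico 0 (2 * π) := toIcoMod_mem_Ico' _ _

lemma exp_I_mul_phase (z : ℂ) : exp (I * phase z) = exp (z.arg * I) := by
  set n := toIcoDiv two_pi_pos 0 z.arg
  have h : phase z = z.arg - n * (2 * π) := by
    rw [phase, ← self_sub_toIcoMod_eq_mul, sub_sub_cancel]
  rw [show I * (phase z : ℂ) = z.arg * I - n * (2 * π * I) by rw [h]; push_cast; ring,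
    Complex.exp_sub, exp_int_mul_two_pi_mul_I, div_one]

lemma norm_mul_exp_I_mul_phase (z : ℂ) : ‖z‖ * exp (I * phase z) = z := by
  rw [exp_I_mul_phase, norm_mul_exp_arg_mul_I]

lemma exp_I_mul_phase_of_ne_zero {z : ℂ} (hz : z ≠ 0) : exp (I * phase z) = z / ‖z‖ := by
  rw [eq_div_iff (ofReal_ne_zero.mpr (norm_ne_zero_iff.mpr hz)), mul_comm,
    norm_mul_exp_I_mul_phase]

lemma exp_I_mul_phase_star {z : ℂ} (hz : z ≠ 0) :
    exp (I * phase (star z)) = exp (-(I * phase z)) := by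
  rw [exp_I_mul_phase_of_ne_zero (star_ne_zero.mpr hz),
    show -(I * (phase z : ℂ)) = starRingEnd ℂ (I * phase z) by simp, Complex.exp_conj,
    exp_I_mul_phase_of_ne_zero hz, map_div₀, conj_ofReal, norm_star, starRingEnd_apply]

end Complex

/-- If `φ` is a fiducial state of a Weyl-Heisenberg covariant SIC-POVM
in dimension `d`, then the vector of squared amplitudes `(|⟨j,φ⟩|²)_j` equals
`F†((1/√d)e₀ + (1/√(d(d+1))) ∑_{j≠0} e^{iα_j} e_j)` for phases `α_j ∈ [0,2π)` with
`α_{d−j} = −α_j` (as phases, i.e. `e^{iα_{d-j}} = e^{-iα_j}`). -/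
theorem fiducial_amplitudes (d : ℕ) [NeZero d] (φ : Fin d → ℂ)
    (hunit : ∑ j, ‖φ j‖ ^ 2 = 1)
    (hfid : ∀ j k : Fin d, (j, k) ≠ (0, 0) →
      ‖star φ ⬝ᵥ ((Xmat d ^ (j : ℕ) * Zmat d ^ (k : ℕ)) *ᵥ φ)‖ ^ 2 = 1 / (d + 1)) :
    ∃ α : Fin d → ℝ, (∀ j, 0 ≤ α j ∧ α j < 2 * Real.pi) ∧
      (∀ j : Fin d, j ≠ 0 →
        Complex.exp (Complex.I * α (-j)) = Complex.exp (-(Complex.I * α j))) ∧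
      (fun j : Fin d => (‖φ j‖ ^ 2 : ℂ)) =
        (Fmat d)ᴴ *ᵥ fun j : Fin d =>
          if j = 0 then (1 / (Real.sqrt d : ℂ))
          else Complex.exp (Complex.I * α j) / (Real.sqrt (d * (d + 1)) : ℂ) := by
  set p : Fin d → ℂ := fun j => (‖φ j‖ : ℂ) ^ 2
  set v := Fmat d *ᵥ p with hv
  have hd : (0 : ℝ) < d := Nat.cast_pos.mpr (NeZero.pos d)
  have hp : p = (Fmat d)ᴴ *ᵥ v := by
    rw [hv, mulVec_mulVec, Fmat_conjTranspose_mul_self, one_mulVec]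
  have hv0 : v 0 = 1 / (√d : ℂ) := by
    rw [hv, Fmat_mulVec_apply_zero]
    congr 1
    simp only [p]
    exact_mod_cast hunit
  have hvnorm (k : Fin d) (hk : k ≠ 0) : ‖v k‖ = (√(d * (d + 1)))⁻¹ := by
    have h := hfid 0 k (by simp [hk])
    rw [Fin.val_zero, pow_zero, one_mul, star_dotProduct_Zmat_pow_mulVec, norm_mul, norm_real,
      Real.norm_of_nonneg (Real.sqrt_nonneg _), mul_pow, Real.sq_sqrt hd.le] at h
    rw [← Real.sqrt_inv, ← Real.sqrt_sq (norm_nonneg (v k))]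
    congr 1
    field_simp at h ⊢
    linarith
  have hvne (k : Fin d) : v k ≠ 0 := by
    by_cases hk : k = 0
    · simp [hk, hv0, hd.ne']
    · rw [← norm_ne_zero_iff, hvnorm k hk]
      positivity
  have hvneg (k : Fin d) : v (-k) = star (v k) :=
    Fmat_mulVec_apply_neg (funext fun i => by simp [p]) k
  refine ⟨fun j => phase (v j), fun j => phase_mem_Ico _,
    fun j _ => by simp only [hvneg, exp_I_mul_phase_star (hvne j)], ?_⟩
  rw [hp]
  congr 1
  ext j
  split_ifs with hj
  · rw [hj, hv0]
  · rw [← norm_mul_exp_I_mul_phase (v j), hvnorm j hj]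
    push_cast
    ring
end
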